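/- arXiv:1911.11271 — 3 statements merged into one kernel-verified Lean document; each statement's English description precedes it below -/
import Mathlib

section
/- Growth of the Monteiro–Svaiter accumulated coefficients (Lemma 3.7(a)): for every N ≥ 0, A_N ≥ (1/4) (∑_{k=1}^N 1/√(L_k))². -/
/-!
Writing `a' = (1/L + √(1/L² + 4A/L))/2` for the coefficient added to `A`, we have
`a' ≥ 1/(2L) + √(A/L)`, hence `A + a' ≥ (√A + 1/(2√L))²`. So every step raises `√A_k` by at least
`1/(2√L_{k+1})`, and summing from `A₀ = 0` gives `√A_N ≥ (1/2) ∑ 1/√L_k`.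
-/

open Finset Real

lemma sqrt_add_inv_sqrt_div_two_le_sqrt {L A : ℝ} (hL : 0 < L) (hA : 0 ≤ A) :
    √A + 1 / √L / 2 ≤ √(A + (1 / L + √(1 / L ^ 2 + 4 * A / L)) / 2) := by
  set s := √A
  set t := √L
  have ht : 0 < t := sqrt_pos.mpr hL
  have hA_eq : A = s ^ 2 := (sq_sqrt hA).symm
  have hL_eq : L = t ^ 2 := (sq_sqrt hL.le).symm
  have hroot : 2 * s / t ≤ √(1 / L ^ 2 + 4 * A / L) := by
    have h2 : 2 * s / t = √(4 * A / L) := by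
      rw [hA_eq, hL_eq, show 4 * s ^ 2 / t ^ 2 = (2 * s / t) ^ 2 by ring,
        sqrt_sq (by positivity)]
    rw [h2]
    exact sqrt_le_sqrt (le_add_of_nonneg_left (by positivity))
  apply le_sqrt_of_sq_le
  calc (s + 1 / t / 2) ^ 2 = s ^ 2 + (1 / t ^ 2 + 2 * s / t) / 2 - 1 / (4 * t ^ 2) := by
        field_simp; ring
    _ ≤ A + (1 / L + √(1 / L ^ 2 + 4 * A / L)) / 2 := by
        rw [← hA_eq, ← hL_eq]
        have : 0 ≤ 1 / (4 * L) := by positivity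
        linarith

lemma half_sum_inv_sqrt_le_sqrt_of_monteiro_svaiter
    {L a A : ℕ → ℝ} (hL : ∀ k, 0 < L (k + 1)) (hA0 : A 0 = 0)
    (ha : ∀ k, a (k + 1) = (1 / L (k + 1) + √(1 / L (k + 1) ^ 2 + 4 * A k / L (k + 1))) / 2)
    (hA : ∀ k, A (k + 1) = A k + a (k + 1)) (n : ℕ) :
    0 ≤ A n ∧ (∑ k ∈ Icc 1 n, 1 / √(L k)) / 2 ≤ √(A n) := by
  induction n with
  | zero => simp [hA0]
  | succ n ih =>
    obtain ⟨hA_nonneg, hsum⟩ := ih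
    have hL_pos := hL n
    refine ⟨?_, ?_⟩
    · rw [hA, ha]
      positivity
    · have hstep := sqrt_add_inv_sqrt_div_two_le_sqrt hL_pos hA_nonneg
      rw [← ha, ← hA] at hstep
      rw [sum_Icc_succ_top (by omega)]
      linarith

/-- Growth of the Monteiro–Svaiter accumulated coefficients (Lemma 3.7(a)). -/
theorem monteiro_svaiter_coefficient_growth
    (L a A : ℕ → ℝ)
    (hL : ∀ k, 0 < L (k + 1))
    (hA0 : A 0 = 0)
    (ha : ∀ k, a (k + 1) =
      (1 / L (k + 1) + Real.sqrt (1 / (L (k + 1)) ^ 2 + 4 * A k / L (k + 1))) / 2)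
    (hA : ∀ k, A (k + 1) = A k + a (k + 1))
    (N : ℕ) :
    A N ≥ 1 / 4 * (∑ k ∈ Finset.Icc 1 N, 1 / Real.sqrt (L k)) ^ 2 := by
  obtain ⟨hA_nonneg, hsum⟩ := half_sum_inv_sqrt_le_sqrt_of_monteiro_svaiter hL hA0 ha hA N
  have hsum_nonneg : 0 ≤ (∑ k ∈ Icc 1 N, 1 / √(L k)) / 2 :=
    div_nonneg (sum_nonneg fun k _ => by positivity) zero_le_two
  calc 1 / 4 * (∑ k ∈ Icc 1 N, 1 / √(L k)) ^ 2 = ((∑ k ∈ Icc 1 N, 1 / √(L k)) / 2) ^ 2 := by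
        ring
    _ ≤ √(A N) ^ 2 := pow_le_pow_left₀ hsum_nonneg hsum 2
    _ = A N := sq_sqrt hA_nonneg
end

section
/- Sufficient inexactness criterion for the Monteiro–Svaiter condition: let f : ℝⁿ → ℝ be convex and differentiable with L_f-Lipschitz gradient, let L > 0, x ∈ ℝⁿ, and let y⋆ = y_L(x) be the (unique) minimizer of F_{L,x} over ℝⁿ. If y ∈ ℝⁿ satisfies ‖y − y⋆‖₂ ≤ (L/(3L + 2L_f)) ‖x − y⋆‖₂, then ‖∇F_{L,x}(y)‖₂ ≤ (L/2) ‖y − x‖₂. -/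
/-!
The minimizer `y⋆` of `F_{L,x}` is a critical point, `∇f(y⋆) = L (x - y⋆)`, so
`∇F_{L,x}(y) = (∇f(y) - ∇f(y⋆)) + L (y - y⋆)` has norm at most `(L_f + L) ‖y - y⋆‖`.
On the other side `‖y - x‖ ≥ ‖x - y⋆‖ - ‖y - y⋆‖`, and the hypothesis
`(3L + 2L_f) ‖y - y⋆‖ ≤ L ‖x - y⋆‖` is exactly what makes
`(L_f + L) ‖y - y⋆‖ ≤ (L/2) (‖x - y⋆‖ - ‖y - y⋆‖)`.
-/

open InnerProductSpace

section

variable {E : Type*} [NormedAddCommGroup E] [InnerProductSpace ℝ E] [CompleteSpace E]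

theorem IsLocalMin.hasGradientAt_eq_zero {f : E → ℝ} {g a : E} (h : IsLocalMin f a)
    (hf : HasGradientAt f g a) : g = 0 :=
  (toDual ℝ E).map_eq_zero_iff.mp (h.hasFDerivAt_eq_zero hf.hasFDerivAt)

theorem HasGradientAt.add_half_mul_norm_sub_sq {f : E → ℝ} {g v : E} (hf : HasGradientAt f g v)
    (L : ℝ) (x : E) :
    HasGradientAt (fun w => f w + L / 2 * ‖w - x‖ ^ 2) (g + L • (v - x)) v := by
  have hsq := ((hasFDerivAt_id v).sub_const x).norm_sq
  rw [hasGradientAt_iff_hasFDerivAt]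
  refine (hf.hasFDerivAt.add (hsq.const_mul (L / 2))).congr_fderiv ?_
  ext w
  simp
  ring

theorem add_smul_sub_eq_zero_of_forall_le_add_half_mul_norm_sub_sq {f : E → ℝ} {g : E}
    {L : ℝ} {x ystar : E} (hf : HasGradientAt f g ystar)
    (hystar : ∀ v, f ystar + L / 2 * ‖ystar - x‖ ^ 2 ≤ f v + L / 2 * ‖v - x‖ ^ 2) :
    g + L • (ystar - x) = 0 :=
  IsLocalMin.hasGradientAt_eq_zero (Filter.Eventually.of_forall hystar)
    (hf.add_half_mul_norm_sub_sq L x)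

end

-- If `c ≤ 0` then `L / c ≤ 0` (also for the junk value `L / 0 = 0`), forcing `r = 0`.
theorem mul_le_mul_of_le_div_mul {L c r d : ℝ} (hL : 0 < L) (hr : 0 ≤ r) (hd : 0 ≤ d)
    (h : r ≤ L / c * d) : c * r ≤ L * d := by
  rcases le_or_gt c 0 with hc | hc
  · nlinarith [div_nonpos_of_nonneg_of_nonpos hL.le hc]
  · rwa [div_mul_eq_mul_div, le_div_iff₀ hc, mul_comm] at h

theorem sufficient_inexactness_criterion_general
    {n : ℕ} (f : EuclideanSpace ℝ (Fin n) → ℝ)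
    (f' : EuclideanSpace ℝ (Fin n) → EuclideanSpace ℝ (Fin n))
    (hgrad : ∀ v, HasGradientAt f (f' v) v)
    (Lf : ℝ) (hLip : ∀ u v, ‖f' u - f' v‖ ≤ Lf * ‖u - v‖)
    (L : ℝ) (hL : 0 < L)
    (x ystar : EuclideanSpace ℝ (Fin n))
    (hystar : ∀ v, f ystar + L / 2 * ‖ystar - x‖ ^ 2 ≤ f v + L / 2 * ‖v - x‖ ^ 2)
    (y : EuclideanSpace ℝ (Fin n))
    (hy : ‖y - ystar‖ ≤ L / (3 * L + 2 * Lf) * ‖x - ystar‖) :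
    ‖f' y + L • (y - x)‖ ≤ L / 2 * ‖y - x‖ := by
  have hcrit := add_smul_sub_eq_zero_of_forall_le_add_half_mul_norm_sub_sq (hgrad ystar) hystar
  have hsplit : f' y + L • (y - x) = (f' y - f' ystar) + L • (y - ystar) := by
    linear_combination (norm := module) hcrit
  have hradius := mul_le_mul_of_le_div_mul hL (norm_nonneg _) (norm_nonneg _) hy
  have hdist : ‖x - ystar‖ - ‖y - ystar‖ ≤ ‖y - x‖ := by
    simpa [norm_sub_rev x y] using norm_sub_norm_le (x - ystar) (y - ystar)
  calc ‖f' y + L • (y - x)‖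
      ≤ ‖f' y - f' ystar‖ + ‖L • (y - ystar)‖ := hsplit ▸ norm_add_le _ _
    _ ≤ Lf * ‖y - ystar‖ + L * ‖y - ystar‖ := by
        rw [norm_smul, Real.norm_of_nonneg hL.le]
        gcongr
        exact hLip y ystar
    _ ≤ L / 2 * (‖x - ystar‖ - ‖y - ystar‖) := by linarith
    _ ≤ L / 2 * ‖y - x‖ := by gcongr

/-- Sufficient inexactness criterion for the Monteiro–Svaiter condition. -/
theorem sufficient_inexactness_criterion
    {n : ℕ} (f : EuclideanSpace ℝ (Fin n) → ℝ)
    (f' : EuclideanSpace ℝ (Fin n) → EuclideanSpace ℝ (Fin n))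
    (hconv : ConvexOn ℝ Set.univ f)
    (hgrad : ∀ v, HasGradientAt f (f' v) v)
    (Lf : ℝ) (hLip : ∀ u v, ‖f' u - f' v‖ ≤ Lf * ‖u - v‖)
    (L : ℝ) (hL : 0 < L)
    (x ystar : EuclideanSpace ℝ (Fin n))
    (hystar : ∀ v, f ystar + L / 2 * ‖ystar - x‖ ^ 2 ≤ f v + L / 2 * ‖v - x‖ ^ 2)
    (y : EuclideanSpace ℝ (Fin n))
    (hy : ‖y - ystar‖ ≤ L / (3 * L + 2 * Lf) * ‖x - ystar‖) :
    ‖f' y + L • (y - x)‖ ≤ L / 2 * ‖y - x‖ :=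
  sufficient_inexactness_criterion_general f f' hgrad Lf hLip L hL x ystar hystar y hy
end

section
/- Gradient formula and smoothness of the Moreau–Yosida envelope: let f : ℝⁿ → ℝ be convex and continuous, and let L > 0. Then for every x ∈ ℝⁿ the minimizer y_L(x) of F_{L,x} over ℝⁿ exists and is unique, the envelope f_L is differentiable at every x with ∇f_L(x) = L(x − y_L(x)), and ∇f_L is L-Lipschitz: ‖∇f_L(x₁) − ∇f_L(x₂)‖₂ ≤ L‖x₁ − x₂‖₂ for all x₁, x₂ ∈ ℝⁿ. -/
open scoped RealInnerProductSpace

section MYAux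
variable {E : Type*} [NormedAddCommGroup E] [InnerProductSpace ℝ E]

lemma prox_subgrad {f : E → ℝ} (hconv : ConvexOn ℝ Set.univ f) {L : ℝ} (hL : 0 < L)
    {x w : E}
    (hw : ∀ v, f w + L / 2 * ‖w - x‖ ^ 2 ≤ f v + L / 2 * ‖v - x‖ ^ 2) :
    ∀ v, f w + ⟪L • (x - w), v - w⟫ ≤ f v := by
  intro v
  have key : ∀ ε > 0, f w + ⟪L • (x - w), v - w⟫ ≤ f v + ε := by
    intro ε hε
    set t : ℝ := min 1 (ε / (L / 2 * (‖v - w‖ ^ 2 + 1))) with ht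
    have hden : 0 < L / 2 * (‖v - w‖ ^ 2 + 1) := by positivity
    have ht0 : 0 < t := lt_min one_pos (by positivity)
    have ht1 : t ≤ 1 := min_le_left _ _
    have htε : L / 2 * t * ‖v - w‖ ^ 2 ≤ ε := by
      have h1 : t ≤ ε / (L / 2 * (‖v - w‖ ^ 2 + 1)) := min_le_right _ _
      have h2 : t * (L / 2 * (‖v - w‖ ^ 2 + 1)) ≤ ε := by
        rw [← le_div_iff₀ hden]; exact h1
      nlinarith [sq_nonneg ‖v - w‖, ht0.le]
    -- convexity
    have hcvx : f (w + t • (v - w)) ≤ (1 - t) * f w + t * f v := by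
      have := hconv.2 (Set.mem_univ w) (Set.mem_univ v) (by linarith : (0:ℝ) ≤ 1 - t) ht0.le (by ring)
      have heq : (1 - t) • w + t • v = w + t • (v - w) := by module
      rwa [heq] at this
    have hmin := hw (w + t • (v - w))
    have hexp : ‖w + t • (v - w) - x‖ ^ 2
        = ‖w - x‖ ^ 2 + 2 * (t * ⟪w - x, v - w⟫) + t ^ 2 * ‖v - w‖ ^ 2 := by
      have : w + t • (v - w) - x = (w - x) + t • (v - w) := by abel
      rw [this, norm_add_sq_real, real_inner_smul_right, norm_smul]
      simp [mul_pow, abs_of_nonneg ht0.le]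
    have hginner : ⟪L • (x - w), v - w⟫ = -(L * ⟪w - x, v - w⟫) := by
      rw [real_inner_smul_left, show x - w = -(w - x) by abel, inner_neg_left]
      ring
    rw [hginner]
    rw [hexp] at hmin
    nlinarith [hmin, hcvx, ht0, sq_nonneg t]
  by_contra hcon
  push_neg at hcon
  have := key ((f w + ⟪L • (x - w), v - w⟫ - f v) / 2) (by linarith)
  linarith

lemma prox_exists [FiniteDimensional ℝ E] {f : E → ℝ} (hconv : ConvexOn ℝ Set.univ f) (hcont : Continuous f)
    {L : ℝ} (hL : 0 < L) (x : E) :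
    ∃ w : E, ∀ v, f w + L / 2 * ‖w - x‖ ^ 2 ≤ f v + L / 2 * ‖v - x‖ ^ 2 := by
  set F : E → ℝ := fun v => f v + L / 2 * ‖v - x‖ ^ 2 with hF
  have hFcont : Continuous F := by fun_prop
  obtain ⟨u₀, hu₀, hu₀min⟩ := (isCompact_closedBall x 1).exists_isMinOn
    ⟨x, Metric.mem_closedBall_self zero_le_one⟩ hcont.continuousOn
  set M : ℝ := max (f x - f u₀) 0 with hM
  have hM0 : 0 ≤ M := le_max_right _ _
  have hfar : ∀ v : E, 1 ≤ ‖v - x‖ → f x - ‖v - x‖ * M ≤ f v := by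
    intro v hs
    set s : ℝ := ‖v - x‖ with hsdef
    have hs0 : 0 < s := lt_of_lt_of_le one_pos hs
    set u : E := x + s⁻¹ • (v - x) with hu
    have hu1 : u ∈ Metric.closedBall x 1 := by
      simp only [Metric.mem_closedBall, dist_eq_norm, hu, add_sub_cancel_left, norm_smul,
        norm_inv, norm_norm]
      rw [Real.norm_eq_abs, abs_of_nonneg hs0.le, ← hsdef, inv_mul_cancel₀ hs0.ne']
    have h1 : (0:ℝ) ≤ 1 - s⁻¹ := by
      have : s⁻¹ ≤ 1 := inv_le_one_of_one_le₀ hs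
      linarith
    have hcvx : f u ≤ (1 - s⁻¹) * f x + s⁻¹ * f v := by
      have := hconv.2 (Set.mem_univ x) (Set.mem_univ v) h1 (inv_nonneg.mpr hs0.le) (by ring)
      have heq : (1 - s⁻¹) • x + s⁻¹ • v = u := by rw [hu]; module
      rwa [heq] at this
    have hlb : f u₀ ≤ f u := hu₀min hu1
    have hMle : f x - f u₀ ≤ M := le_max_left _ _
    have hcomb : f u₀ ≤ (1 - s⁻¹) * f x + s⁻¹ * f v := hlb.trans hcvx
    have h2 : s * f u₀ ≤ s * ((1 - s⁻¹) * f x + s⁻¹ * f v) :=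
      mul_le_mul_of_nonneg_left hcomb hs0.le
    have hr : s * ((1 - s⁻¹) * f x + s⁻¹ * f v) = s * f x - f x + f v := by
      field_simp
    rw [hr] at h2
    nlinarith [mul_le_mul_of_nonneg_left hMle hs0.le]
  obtain ⟨R, hR1, hRM⟩ : ∃ R : ℝ, 1 ≤ R ∧ 2 * M / L < R :=
    ⟨max 1 (2 * M / L) + 1, by have := le_max_left 1 (2 * M / L); linarith,
      by have := le_max_right 1 (2 * M / L); linarith⟩
  obtain ⟨w, hwball, hwmin⟩ := (isCompact_closedBall x R).exists_isMinOn
    ⟨x, Metric.mem_closedBall_self (by linarith)⟩ hFcont.continuousOn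
  refine ⟨w, fun v => ?_⟩
  by_cases hv : v ∈ Metric.closedBall x R
  · exact hwmin hv
  · have hFw : F w ≤ F x := hwmin (Metric.mem_closedBall_self (by linarith))
    have hs : R < ‖v - x‖ := by
      simpa [Metric.mem_closedBall, dist_eq_norm, not_le] using hv
    have hs1 : 1 ≤ ‖v - x‖ := le_of_lt (lt_of_le_of_lt hR1 hs)
    have hlow := hfar v hs1
    have h2 : 2 * M < L * ‖v - x‖ := by
      have h1 : 2 * M / L < ‖v - x‖ := lt_of_lt_of_le hRM hs.le
      rw [div_lt_iff₀ hL] at h1; linarith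
    have hquad : ‖v - x‖ * M < L / 2 * ‖v - x‖ ^ 2 := by
      nlinarith [mul_lt_mul_of_pos_left h2 (lt_of_lt_of_le one_pos hs1)]
    have hxx : F x = f x := by simp [hF]
    have hvv : F v = f v + L / 2 * ‖v - x‖ ^ 2 := rfl
    have : F x < F v := by rw [hxx, hvv]; linarith
    exact hFw.trans this.le

lemma prox_unique {f : E → ℝ} (hconv : ConvexOn ℝ Set.univ f)
    {L : ℝ} (hL : 0 < L) {x w₁ w₂ : E}
    (h1 : ∀ v, f w₁ + L / 2 * ‖w₁ - x‖ ^ 2 ≤ f v + L / 2 * ‖v - x‖ ^ 2)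
    (h2 : ∀ v, f w₂ + L / 2 * ‖w₂ - x‖ ^ 2 ≤ f v + L / 2 * ‖v - x‖ ^ 2) :
    w₁ = w₂ := by
  set m : E := (1/2 : ℝ) • w₁ + (1/2 : ℝ) • w₂ with hm
  have hfm : f m ≤ 1/2 * f w₁ + 1/2 * f w₂ :=
    hconv.2 (Set.mem_univ w₁) (Set.mem_univ w₂) (by norm_num) (by norm_num) (by norm_num)
  have hmx : m - x = (1/2 : ℝ) • (w₁ - x) + (1/2 : ℝ) • (w₂ - x) := by rw [hm]; module
  have hnorm : ‖m - x‖ ^ 2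
      = 1/4 * ‖w₁ - x‖ ^ 2 + 1/2 * ⟪w₁ - x, w₂ - x⟫ + 1/4 * ‖w₂ - x‖ ^ 2 := by
    rw [hmx, norm_add_sq_real, real_inner_smul_left, real_inner_smul_right,
      norm_smul, norm_smul]
    simp [Real.norm_eq_abs]
    ring
  have hsub : ‖w₁ - w₂‖ ^ 2 = ‖w₁ - x‖ ^ 2 - 2 * ⟪w₁ - x, w₂ - x⟫ + ‖w₂ - x‖ ^ 2 := by
    have h : w₁ - w₂ = (w₁ - x) - (w₂ - x) := by abel
    rw [h, norm_sub_sq_real]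
  have ha := h1 m
  have hb := h2 m
  have h3 : L * (‖w₁ - w₂‖ ^ 2 / 4)
      = L / 2 * ‖w₁ - x‖ ^ 2 + L / 2 * ‖w₂ - x‖ ^ 2 - L * ‖m - x‖ ^ 2 := by
    rw [hsub, hnorm]; ring
  have h4 : L / 2 * ‖w₁ - x‖ ^ 2 + L / 2 * ‖w₂ - x‖ ^ 2 - L * ‖m - x‖ ^ 2 ≤ 0 := by
    linarith
  have h5 : ‖w₁ - w₂‖ ^ 2 ≤ 0 := by nlinarith [h3, h4, hL]
  have h6 : ‖w₁ - w₂‖ = 0 := by nlinarith [norm_nonneg (w₁ - w₂)]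
  rwa [norm_sub_eq_zero_iff] at h6

lemma env_val {f : E → ℝ} {L : ℝ} {x w : E}
    (hw : ∀ v, f w + L / 2 * ‖w - x‖ ^ 2 ≤ f v + L / 2 * ‖v - x‖ ^ 2) :
    (⨅ y : E, (f y + L / 2 * ‖y - x‖ ^ 2)) = f w + L / 2 * ‖w - x‖ ^ 2 := by
  refine le_antisymm (ciInf_le ⟨f w + L / 2 * ‖w - x‖ ^ 2, ?_⟩ w) (le_ciInf hw)
  rintro r ⟨v, rfl⟩
  exact hw v

lemma sandwich {f : E → ℝ} (hconv : ConvexOn ℝ Set.univ f) {L : ℝ} (hL : 0 < L)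
    (fL : E → ℝ) (hfL : ∀ x, fL x = ⨅ y : E, (f y + L / 2 * ‖y - x‖ ^ 2))
    (yL : E → E)
    (hmin : ∀ x v, f (yL x) + L / 2 * ‖yL x - x‖ ^ 2 ≤ f v + L / 2 * ‖v - x‖ ^ 2)
    (hsg : ∀ x v, f (yL x) + ⟪L • (x - yL x), v - yL x⟫ ≤ f v)
    (x u : E) :
    0 ≤ fL u - fL x - ⟪L • (x - yL x), u - x⟫ ∧
      fL u - fL x - ⟪L • (x - yL x), u - x⟫ ≤ L / 2 * ‖u - x‖ ^ 2 := by
  have hvalx : fL x = f (yL x) + L / 2 * ‖yL x - x‖ ^ 2 := by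
    rw [hfL x]; exact env_val (hmin x)
  have hvalu : fL u = f (yL u) + L / 2 * ‖yL u - u‖ ^ 2 := by
    rw [hfL u]; exact env_val (hmin u)
  set w := yL x
  set wu := yL u
  have hg : ⟪L • (x - w), u - x⟫ = L * ⟪x - w, u - x⟫ := real_inner_smul_left _ _ _
  constructor
  · -- lower bound
    have hsub := hsg x wu
    rw [hvalu, hvalx]
    have hkey : 0 ≤ L / 2 * ‖(x - w) - (u - wu)‖ ^ 2 := by positivity
    have hexp : ‖(x - w) - (u - wu)‖ ^ 2
        = ‖x - w‖ ^ 2 - 2 * ⟪x - w, u - wu⟫ + ‖u - wu‖ ^ 2 := norm_sub_sq_real _ _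
    have hginner : ⟪L • (x - w), wu - w⟫ = L * ⟪x - w, wu - w⟫ := real_inner_smul_left _ _ _
    rw [hginner] at hsub
    rw [hg]
    have hi1 : ⟪x - w, u - wu⟫ = ⟪x - w, u - x⟫ + ⟪x - w, x - w⟫ - ⟪x - w, wu - w⟫ := by
      rw [← inner_add_right, ← inner_sub_right]
      congr 1
      abel
    have hnx : ⟪x - w, x - w⟫ = ‖x - w‖ ^ 2 := real_inner_self_eq_norm_sq _
    have hnw : ‖w - x‖ ^ 2 = ‖x - w‖ ^ 2 := by rw [norm_sub_rev]
    have hnu : ‖wu - u‖ ^ 2 = ‖u - wu‖ ^ 2 := by rw [norm_sub_rev]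
    rw [hexp, hi1, hnx] at hkey
    rw [hnw, hnu]
    nlinarith [hkey, hsub, hL]
  · -- upper bound
    have hub : fL u ≤ f w + L / 2 * ‖w - u‖ ^ 2 := by
      rw [hvalu]; exact hmin u w
    rw [hg]
    have hexp : ‖w - u‖ ^ 2 = ‖w - x‖ ^ 2 - 2 * ⟪w - x, u - x⟫ + ‖u - x‖ ^ 2 := by
      have h : w - u = (w - x) - (u - x) := by abel
      rw [h, norm_sub_sq_real]
    have hi : ⟪x - w, u - x⟫ = -⟪w - x, u - x⟫ := by
      rw [show x - w = -(w - x) by abel, inner_neg_left]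
    rw [hvalx, hi]
    nlinarith [hub, hexp, hL]

lemma grad_at [CompleteSpace E] {f : E → ℝ} (hconv : ConvexOn ℝ Set.univ f) {L : ℝ} (hL : 0 < L)
    (fL : E → ℝ) (hfL : ∀ x, fL x = ⨅ y : E, (f y + L / 2 * ‖y - x‖ ^ 2))
    (yL : E → E)
    (hmin : ∀ x v, f (yL x) + L / 2 * ‖yL x - x‖ ^ 2 ≤ f v + L / 2 * ‖v - x‖ ^ 2)
    (hsg : ∀ x v, f (yL x) + ⟪L • (x - yL x), v - yL x⟫ ≤ f v)
    (x : E) : HasGradientAt fL (L • (x - yL x)) x := by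
  rw [hasGradientAt_iff_isLittleO]
  rw [Asymptotics.isLittleO_iff]
  intro c hc
  have hball : Metric.ball x (2 * c / L) ∈ nhds x := Metric.ball_mem_nhds x (by positivity)
  filter_upwards [hball] with u hu
  have hd : ‖u - x‖ < 2 * c / L := by rwa [Metric.mem_ball, dist_eq_norm] at hu
  obtain ⟨hlo, hhi⟩ := sandwich hconv hL fL hfL yL hmin hsg x u
  have habs : |fL u - fL x - ⟪L • (x - yL x), u - x⟫| ≤ L / 2 * ‖u - x‖ ^ 2 := by
    rw [abs_le]; constructor
    · nlinarith [sq_nonneg ‖u - x‖, hL]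
    · exact hhi
  have h2 : L / 2 * ‖u - x‖ ^ 2 ≤ c * ‖u - x‖ := by
    have hlt : ‖u - x‖ * L < 2 * c := (lt_div_iff₀ hL).mp hd
    nlinarith [norm_nonneg (u - x), hlt]
  calc ‖fL u - fL x - ⟪L • (x - yL x), u - x⟫‖
      = |fL u - fL x - ⟪L • (x - yL x), u - x⟫| := Real.norm_eq_abs _
    _ ≤ L / 2 * ‖u - x‖ ^ 2 := habs
    _ ≤ c * ‖u - x‖ := h2

lemma lip {f : E → ℝ} {L : ℝ} (hL : 0 < L) (yL : E → E)
    (hsg : ∀ x v, f (yL x) + ⟪L • (x - yL x), v - yL x⟫ ≤ f v)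
    (x₁ x₂ : E) :
    ‖L • (x₁ - yL x₁) - L • (x₂ - yL x₂)‖ ≤ L * ‖x₁ - x₂‖ := by
  set g₁ := L • (x₁ - yL x₁) with hg1
  set g₂ := L • (x₂ - yL x₂) with hg2
  have ha := hsg x₁ (yL x₂)
  have hb := hsg x₂ (yL x₁)
  have hmono : 0 ≤ ⟪g₁ - g₂, yL x₁ - yL x₂⟫ := by
    have h1 : ⟪g₁, yL x₂ - yL x₁⟫ + ⟪g₂, yL x₁ - yL x₂⟫ ≤ 0 := by linarith
    have h2 : ⟪g₁, yL x₂ - yL x₁⟫ = -⟪g₁, yL x₁ - yL x₂⟫ := by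
      rw [show yL x₂ - yL x₁ = -(yL x₁ - yL x₂) by abel, inner_neg_right]
    rw [inner_sub_left]
    linarith [h1, h2.symm ▸ h1]
  have hdecomp : (x₁ - x₂ : E) = L⁻¹ • (g₁ - g₂) + (yL x₁ - yL x₂) := by
    rw [hg1, hg2, ← smul_sub, inv_smul_smul₀ hL.ne']
    abel
  have hsq : ‖g₁ - g₂‖ ^ 2 ≤ L * ⟪g₁ - g₂, x₁ - x₂⟫ := by
    rw [hdecomp, inner_add_right, real_inner_smul_right, real_inner_self_eq_norm_sq]
    have : L * (L⁻¹ * ‖g₁ - g₂‖ ^ 2) = ‖g₁ - g₂‖ ^ 2 := by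
      field_simp
    rw [mul_add, this]
    nlinarith [hmono, hL]
  have hcs : ⟪g₁ - g₂, x₁ - x₂⟫ ≤ ‖g₁ - g₂‖ * ‖x₁ - x₂‖ := real_inner_le_norm _ _
  by_cases hz : ‖g₁ - g₂‖ = 0
  · rw [hz]; positivity
  · have hpos : 0 < ‖g₁ - g₂‖ := lt_of_le_of_ne (norm_nonneg _) (Ne.symm hz)
    nlinarith [hsq, hcs, hL, hpos]
end MYAux

/-- Gradient formula and smoothness of the Moreau–Yosida envelope: the proximal
point exists and is unique, the envelope is differentiable with gradient
`L (x - y_L x)`, and this gradient is `L`-Lipschitz. -/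
theorem moreau_yosida_gradient_and_smoothness
    {n : ℕ} (f : EuclideanSpace ℝ (Fin n) → ℝ)
    (hconv : ConvexOn ℝ Set.univ f)
    (hcont : Continuous f)
    (L : ℝ) (hL : 0 < L)
    (fL : EuclideanSpace ℝ (Fin n) → ℝ)
    (hfL : ∀ x, fL x = ⨅ y : EuclideanSpace ℝ (Fin n), (f y + L / 2 * ‖y - x‖ ^ 2)) :
    (∀ x : EuclideanSpace ℝ (Fin n), ∃! w : EuclideanSpace ℝ (Fin n),
        ∀ v, f w + L / 2 * ‖w - x‖ ^ 2 ≤ f v + L / 2 * ‖v - x‖ ^ 2) ∧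
      ∀ yL : EuclideanSpace ℝ (Fin n) → EuclideanSpace ℝ (Fin n),
        (∀ x v, f (yL x) + L / 2 * ‖yL x - x‖ ^ 2 ≤ f v + L / 2 * ‖v - x‖ ^ 2) →
          (∀ x, HasGradientAt fL (L • (x - yL x)) x) ∧
            (∀ x₁ x₂, ‖L • (x₁ - yL x₁) - L • (x₂ - yL x₂)‖ ≤ L * ‖x₁ - x₂‖) := by
  constructor
  · intro x
    obtain ⟨w, hw⟩ := prox_exists hconv hcont hL x
    exact ⟨w, hw, fun w' hw' => prox_unique hconv hL hw' hw⟩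
  · intro yL hmin
    have hsg : ∀ x v, f (yL x) + ⟪L • (x - yL x), v - yL x⟫ ≤ f v :=
      fun x v => prox_subgrad hconv hL (hmin x) v
    exact ⟨fun x => grad_at hconv hL fL hfL yL hmin hsg x,
      fun x₁ x₂ => lip hL yL hsg x₁ x₂⟩
end
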